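/- Combining existence and uniqueness: for an acyclic cycle orientation configuration 𝔠 on a finite connected graph G, the 𝔠-faithful orientations form a system of representatives for the cycle reversal classes of orientations of G (exactly one per class). -/

import Mathlib

open scoped Classical

variable {V E : Type} [Fintype V] [Fintype E] [DecidableEq V] [DecidableEq E]

/-- Reachability between vertices using (undirected) edges from the set `A`. -/
def ReachIn (ι : E → V × V) (A : Set E) (a b : V) : Prop :=
  Relation.ReflTransGen (fun x y => ∃ e ∈ A, ι e = (x, y) ∨ ι e = (y, x)) a b

/-- The graph with edge set `A` (on all of `V`) is connected. -/
def Conn (ι : E → V × V) (A : Set E) : Prop := ∀ a b : V, ReachIn ι A a b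

/-- `C : E → ℤ` is the signed indicator vector of a (simple, directed) cycle:
entries in `{-1,0,1}`, nonempty support, zero boundary, every vertex meets
0 or 2 support edges, and the support is connected. -/
def IsCycleVec (ι : E → V × V) (C : E → ℤ) : Prop :=
  (∀ e, C e = 0 ∨ C e = 1 ∨ C e = -1) ∧
  (∃ e, C e ≠ 0) ∧
  (∀ v : V, ∑ e : E, C e *
      ((if (ι e).2 = v then 1 else 0) - (if (ι e).1 = v then 1 else 0)) = 0) ∧
  (∀ v : V,
    (Finset.univ.filter fun e => C e ≠ 0 ∧ ((ι e).1 = v ∨ (ι e).2 = v)).card = 0 ∨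
    (Finset.univ.filter fun e => C e ≠ 0 ∧ ((ι e).1 = v ∨ (ι e).2 = v)).card = 2) ∧
  (∀ a b : V, (∃ e, C e ≠ 0 ∧ ((ι e).1 = a ∨ (ι e).2 = a)) →
    (∃ e, C e ≠ 0 ∧ ((ι e).1 = b ∨ (ι e).2 = b)) →
    ReachIn ι {e | C e ≠ 0} a b)

/-- An orientation of `G`, recorded as a sign for each edge relative to the reference
orientation `ι`. -/
def IsOrient (σ : E → ℤ) : Prop := ∀ e, σ e = 1 ∨ σ e = -1

/-- `C` is a directed cycle of the orientation `σ`. -/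
def DirCycle (ι : E → V × V) (σ : E → ℤ) (C : E → ℤ) : Prop :=
  IsCycleVec ι C ∧ ∀ e, C e ≠ 0 → C e = σ e

/-- One cycle reversal step: reverse all edges of a directed cycle of `σ`. -/
def RevStep (ι : E → V × V) (σ τ : E → ℤ) : Prop :=
  ∃ C : E → ℤ, DirCycle ι σ C ∧ ∀ e, τ e = if C e ≠ 0 then -σ e else σ e

/-- A cycle orientation configuration: a choice, for each cycle of `G`, of exactly one of
its two orientations. -/
def IsConfig (ι : E → V × V) (𝔠 : Set (E → ℤ)) : Prop :=
  (∀ C ∈ 𝔠, IsCycleVec ι C) ∧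
  (∀ C : E → ℤ, IsCycleVec ι C → (C ∈ 𝔠 ↔ (fun e => -C e) ∉ 𝔠))

/-- Acyclicity of a configuration: no nontrivial nonnegative integer combination of its
oriented cycle vectors vanishes. -/
def ConfigAcyclic (𝔠 : Set (E → ℤ)) : Prop :=
  ∀ (k : ℕ) (Cs : Fin k → E → ℤ) (n : Fin k → ℕ),
    (∀ i, Cs i ∈ 𝔠) → (∀ e, ∑ i, (n i : ℤ) * Cs i e = 0) → ∀ i, n i = 0

/-- `σ` is `𝔠`-faithful: every directed cycle of `σ` is oriented as prescribed by `𝔠`. -/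
def Faithful (ι : E → V × V) (𝔠 : Set (E → ℤ)) (σ : E → ℤ) : Prop :=
  ∀ C : E → ℤ, DirCycle ι σ C → C ∈ 𝔠


/-! Reversing a directed cycle `C` of `σ` turns `σ` into `σ - 2C`. Existence: keep reversing
directed cycles whose opposite lies in `𝔠`. A closed chain of such reversals would make a nonempty
sum of members of `𝔠` vanish, and there are finitely many orientations, so this terminates, and
it can only stop at a `𝔠`-faithful orientation. Uniqueness: two orientations of one class differ
by `2X` with `X` a `{0, ±1}`-vector of zero boundary. Every vertex that `X` enters it also leaves,
so following `X` from edge to edge closes up into a cycle `C` directed in one orientation whose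
opposite `-C` is directed in the other; if both were faithful, `C` and `-C` would lie in `𝔠`. -/

open Finset Function Relation

theorem Function.exists_isPeriodicPt_iterate {α : Type*} [Finite α] (f : α → α) (x : α) :
    ∃ m n, 0 < n ∧ IsPeriodicPt f n (f^[m] x) := by
  obtain ⟨a, b, hab, heq⟩ := Finite.exists_ne_map_eq_of_infinite fun n => f^[n] x
  wlog hlt : a < b generalizing a b
  · exact this b a hab.symm heq.symm (by omega)
  refine ⟨a, b - a, by omega, ?_⟩
  change f^[b - a] (f^[a] x) = f^[a] x
  rw [← iterate_add_apply, Nat.sub_add_cancel hlt.le, ← heq]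

theorem Function.IsPeriodicPt.iterate_pred_apply {α : Type*} {f : α → α} {n : ℕ} {x : α}
    (h : IsPeriodicPt f n x) (hn : 0 < n) : f^[n - 1] (f x) = x := by
  rw [← iterate_succ_apply, Nat.succ_eq_add_one, Nat.sub_add_cancel hn]
  exact h

theorem Function.IsPeriodicPt.apply_iterate_pred {α : Type*} {f : α → α} {n : ℕ} {x : α}
    (h : IsPeriodicPt f n x) (hn : 0 < n) : f (f^[n - 1] x) = x := by
  rw [← iterate_succ_apply' f, Nat.succ_eq_add_one, Nat.sub_add_cancel hn]
  exact h

theorem Relation.exists_reflTransGen_normal_form {α : Type*} {r : α → α → Prop} {a : α}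
    (hfin : {b | ReflTransGen r a b}.Finite) (hcyc : ∀ b, ¬TransGen r b b) :
    ∃ b, ReflTransGen r a b ∧ ∀ c, ¬r b c := by
  have : IsStrictOrder α (fun x y => TransGen r y x) :=
    { irrefl := hcyc, trans := fun _ _ _ h₁ h₂ => h₂.trans h₁ }
  obtain ⟨⟨b, hab⟩, -, hmin⟩ :=
    (hfin.wellFoundedOn (r := fun x y => TransGen r y x)).has_min Set.univ ⟨⟨a, .refl⟩, trivial⟩
  exact ⟨b, hab, fun c hbc => hmin ⟨c, hab.tail hbc⟩ trivial (.single hbc)⟩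

theorem ZMod.intCast_sum_eq_card_filter_ne_zero {α : Type*} {s : Finset α} {f : α → ℤ}
    (hf : ∀ a ∈ s, f a = 0 ∨ f a = 1 ∨ f a = -1) :
    ((∑ a ∈ s, f a : ℤ) : ZMod 2) = #{a ∈ s | f a ≠ 0} := by
  rw [Int.cast_sum, natCast_card_filter]
  refine sum_congr rfl fun a ha => ?_
  rcases hf a ha with h | h | h <;> simp [h]

section

omit [Fintype V] [DecidableEq E]

variable {ι : E → V × V}

omit [Fintype E] [DecidableEq V] in
theorem ReachIn.symm {A : Set E} {a b : V} (h : ReachIn ι A a b) : ReachIn ι A b a :=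
  have : Std.Symm fun x y => ∃ e ∈ A, ι e = (x, y) ∨ ι e = (y, x) :=
    ⟨fun _ _ ⟨e, he, h⟩ => ⟨e, he, h.symm⟩⟩
  symm_of (ReflTransGen _) h

section

omit [Fintype E]

def incidence (ι : E → V × V) (e : E) (v : V) : ℤ :=
  (if (ι e).2 = v then 1 else 0) - (if (ι e).1 = v then 1 else 0)

theorem incidence_ne_zero_iff {e : E} {v : V} :
    incidence ι e v ≠ 0 ↔ ((ι e).1 = v ∨ (ι e).2 = v) ∧ ι e ≠ (v, v) := by
  unfold incidence
  split_ifs <;> simp_all [Prod.ext_iff]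

theorem incidence_eq_zero_or_one_or_neg_one (e : E) (v : V) :
    incidence ι e v = 0 ∨ incidence ι e v = 1 ∨ incidence ι e v = -1 := by
  unfold incidence
  split_ifs <;> simp

end

def boundary (ι : E → V × V) : (E → ℤ) →+ (V → ℤ) where
  toFun C v := ∑ e, C e * incidence ι e v
  map_zero' := by ext; simp
  map_add' _ _ := by ext; simp [add_mul, sum_add_distrib]

def loopSum (ι : E → V × V) : (E → ℤ) →+ (V → ℤ) where
  toFun C v := ∑ e with ι e = (v, v), C e
  map_zero' := by ext; simp
  map_add' _ _ := by ext; simp [sum_add_distrib]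

def incidentSupport (ι : E → V × V) (C : E → ℤ) (v : V) : Finset E :=
  {e | C e ≠ 0 ∧ ((ι e).1 = v ∨ (ι e).2 = v)}

@[simp]
theorem mem_incidentSupport {C : E → ℤ} {v : V} {e : E} :
    e ∈ incidentSupport ι C v ↔ C e ≠ 0 ∧ ((ι e).1 = v ∨ (ι e).2 = v) := by
  simp [incidentSupport]

theorem boundary_apply_eq_sum_incidentSupport (C : E → ℤ) (v : V) :
    boundary ι C v = ∑ e ∈ incidentSupport ι C v, C e * incidence ι e v :=
  (sum_filter_of_ne fun _ _ h =>
    ⟨left_ne_zero_of_mul h, (incidence_ne_zero_iff.mp (right_ne_zero_of_mul h)).1⟩).symm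

theorem loopSum_apply_eq_sum_incidentSupport (C : E → ℤ) (v : V) :
    loopSum ι C v = ∑ e ∈ incidentSupport ι C v with ι e = (v, v), C e := by
  refine (sum_subset (fun e he => ?_) fun e he hne => ?_).symm
  · simpa using (mem_filter.mp he).2
  · simp only [mem_filter, mem_univ, true_and, mem_incidentSupport] at he hne
    by_contra hC
    exact hne ⟨⟨hC, by simp [he]⟩, he⟩

/- Loops have zero incidence, so `boundary` does not see them; but a single loop is not a cycle
(it meets its vertex once), so loops at a vertex can only be reversed in pairs, which `loopSum`
records modulo 2. -/
def IsEvenCirculation (ι : E → V × V) (X : E → ℤ) : Prop :=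
  boundary ι X = 0 ∧ ∀ v, 2 ∣ loopSum ι X v

theorem IsEvenCirculation.sub {X Y : E → ℤ} (hX : IsEvenCirculation ι X)
    (hY : IsEvenCirculation ι Y) : IsEvenCirculation ι (X - Y) :=
  ⟨by rw [map_sub, hX.1, hY.1, sub_zero], fun v => by
    rw [map_sub, Pi.sub_apply]; exact dvd_sub (hX.2 v) (hY.2 v)⟩

variable {C σ τ : E → ℤ}

theorem IsCycleVec.two_dvd_loopSum (h : IsCycleVec ι C) (v : V) : 2 ∣ loopSum ι C v := by
  -- Modulo 2, `boundary ι C v` counts the non-loop edges of `C` at `v` and `loopSum ι C v` its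
  -- loops at `v`; together there are 0 or 2 of them.
  obtain ⟨h01, -, hbd, hdeg, -⟩ := h
  have hdegv : #(incidentSupport ι C v) = 0 ∨ #(incidentSupport ι C v) = 2 := hdeg v
  have hnonloop : 2 ∣ #{e ∈ incidentSupport ι C v | ¬ι e = (v, v)} := by
    have hterms : {e ∈ incidentSupport ι C v | C e * incidence ι e v ≠ 0} =
        {e ∈ incidentSupport ι C v | ¬ι e = (v, v)} :=
      filter_congr fun e he => by
        rw [mem_incidentSupport] at he
        simp [incidence_ne_zero_iff, he.1, he.2]
    have hcast : ((boundary ι C v : ℤ) : ZMod 2) = 0 := by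
      rw [show boundary ι C v = 0 from hbd v, Int.cast_zero]
    rwa [boundary_apply_eq_sum_incidentSupport, ZMod.intCast_sum_eq_card_filter_ne_zero
      fun e _ => by
        rcases h01 e with h | h | h <;>
          rcases incidence_eq_zero_or_one_or_neg_one (ι := ι) e v with h' | h' | h' <;>
          simp [h, h'],
      hterms, ZMod.natCast_eq_zero_iff] at hcast
  have hloop : ((loopSum ι C v : ℤ) : ZMod 2) = #{e ∈ incidentSupport ι C v | ι e = (v, v)} := by
    rw [loopSum_apply_eq_sum_incidentSupport, ZMod.intCast_sum_eq_card_filter_ne_zero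
      fun e _ => h01 e,
      filter_true_of_mem fun e he => (mem_incidentSupport.mp (mem_filter.mp he).1).1]
  have hsplit := card_filter_add_card_filter_not (s := incidentSupport ι C v) (ι · = (v, v))
  have hcast : ((loopSum ι C v : ℤ) : ZMod 2) = 0 := by
    rw [hloop, ZMod.natCast_eq_zero_iff]
    omega
  exact_mod_cast (ZMod.intCast_zmod_eq_zero_iff_dvd _ 2).mp hcast

theorem IsCycleVec.isEvenCirculation (h : IsCycleVec ι C) : IsEvenCirculation ι C :=
  ⟨funext h.2.2.1, h.two_dvd_loopSum⟩

theorem IsCycleVec.neg (h : IsCycleVec ι C) : IsCycleVec ι (-C) := by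
  obtain ⟨h01, ⟨e, he⟩, hbd, hdeg, hconn⟩ := h
  refine ⟨fun e => ?_, ⟨e, by simpa using he⟩, fun v => ?_, fun v => ?_, fun a b ha hb => ?_⟩
  · rcases h01 e with h | h | h <;> simp [h]
  · simp only [Pi.neg_apply, neg_mul, sum_neg_distrib, hbd v, neg_zero]
  · simpa only [Pi.neg_apply, ne_eq, neg_eq_zero] using hdeg v
  · simp only [Pi.neg_apply, ne_eq, neg_eq_zero] at ha hb ⊢
    exact hconn a b ha hb

theorem DirCycle.reversal_eq (h : DirCycle ι σ C) :
    (fun e => if C e ≠ 0 then -σ e else σ e) = σ - 2 • C := by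
  funext e
  by_cases hC : C e = 0
  · simp [hC]
  · rw [if_pos hC]
    simp only [Pi.sub_apply, Pi.smul_apply, h.2 e hC]
    ring

theorem revStep_iff : RevStep ι σ τ ↔ ∃ C, DirCycle ι σ C ∧ τ = σ - 2 • C :=
  exists_congr fun _ => and_congr_right fun h => by rw [← h.reversal_eq, funext_iff]

theorem RevStep.symm (h : RevStep ι σ τ) : RevStep ι τ σ := by
  obtain ⟨C, hC, rfl⟩ := revStep_iff.mp h
  refine revStep_iff.mpr ⟨-C, ⟨hC.1.neg, fun e he => ?_⟩, ?_⟩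
  · have hCe := hC.2 e (by simpa using he)
    simp only [Pi.neg_apply, Pi.sub_apply, Pi.smul_apply, hCe]
    ring
  · rw [smul_neg, sub_neg_eq_add, sub_add_cancel]

instance : Std.Symm (RevStep ι) := ⟨fun _ _ => RevStep.symm⟩

theorem RevStep.isOrient (h : RevStep ι σ τ) (hσ : IsOrient σ) : IsOrient τ := by
  obtain ⟨C, hC, rfl⟩ := revStep_iff.mp h
  intro e
  by_cases hCe : C e = 0
  · simpa [hCe] using hσ e
  · simp only [Pi.sub_apply, Pi.smul_apply, hC.2 e hCe]
    rcases hσ e with h | h <;> simp [h]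

theorem exists_isEvenCirculation_of_reflTransGen (h : ReflTransGen (RevStep ι) σ τ) :
    ∃ X, IsEvenCirculation ι X ∧ τ = σ + 2 • X := by
  induction h with
  | refl => exact ⟨0, ⟨map_zero _, by simp⟩, by simp⟩
  | tail _ hstep ih =>
    obtain ⟨X, hX, rfl⟩ := ih
    obtain ⟨C, hC, rfl⟩ := revStep_iff.mp hstep
    exact ⟨X - C, hX.sub hC.1.isEvenCirculation, by rw [smul_sub]; abel⟩

variable {D : E → ℤ}

section

omit [Fintype E] [DecidableEq V]

def Traverses (ι : E → V × V) (D : E → ℤ) (e : E) (a b : V) : Prop :=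
  D e = 1 ∧ ι e = (a, b) ∨ D e = -1 ∧ ι e = (b, a)

variable {e : E} {a b : V}

theorem Traverses.ne_zero (h : Traverses ι D e a b) : D e ≠ 0 := by
  rcases h with ⟨h, -⟩ | ⟨h, -⟩ <;> simp [h]

theorem Traverses.adj (h : Traverses ι D e a b) : ι e = (a, b) ∨ ι e = (b, a) := by
  rcases h with ⟨-, h⟩ | ⟨-, h⟩ <;> simp [h]

theorem Traverses.incident_iff (h : Traverses ι D e a b) {v : V} :
    (ι e).1 = v ∨ (ι e).2 = v ↔ a = v ∨ b = v := by
  rcases h.adj with h | h <;> simp [h, or_comm]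

theorem Traverses.left_unique {a' b' : V} (h : Traverses ι D e a b)
    (h' : Traverses ι D e a' b') : a = a' := by
  rcases h with ⟨h₁, h₂⟩ | ⟨h₁, h₂⟩ <;> rcases h' with ⟨h₁', h₂'⟩ | ⟨h₁', h₂'⟩ <;>
    simp_all [Prod.ext_iff]

theorem Traverses.ne (h : Traverses ι D e a b) (hloop : (ι e).1 ≠ (ι e).2) : a ≠ b := by
  rintro rfl
  rcases h.adj with h | h <;> simp [h] at hloop

theorem exists_traverses (h : D e = 1 ∨ D e = -1) : ∃ a b, Traverses ι D e a b := by
  rcases h with h | h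
  · exact ⟨_, _, .inl ⟨h, rfl⟩⟩
  · exact ⟨_, _, .inr ⟨h, rfl⟩⟩

end

omit [Fintype E] in
theorem Traverses.mul_incidence {e : E} {a b : V} (h : Traverses ι D e a b) (v : V) :
    D e * incidence ι e v = (if b = v then 1 else 0) - (if a = v then 1 else 0) := by
  unfold incidence
  rcases h with ⟨hD, h⟩ | ⟨hD, h⟩ <;> simp only [hD, h] <;> ring

theorem Traverses.exists_traverses_of_boundary_eq_zero
    (h01 : ∀ e, D e = 0 ∨ D e = 1 ∨ D e = -1) (hbd : boundary ι D = 0) {e : E} {a v : V}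
    (h : Traverses ι D e a v) : ∃ e' c, Traverses ι D e' v c := by
  by_contra! hout
  have hterm : ∀ x, 0 ≤ D x * incidence ι x v := fun x => by
    rcases h01 x with hx | hx
    · simp [hx]
    obtain ⟨b, c, hbc⟩ := exists_traverses hx
    have hb : b ≠ v := fun hb => hout x c (hb ▸ hbc)
    rw [hbc.mul_incidence, if_neg hb]
    split_ifs <;> norm_num
  have ha : a ≠ v := fun ha => hout e v (ha ▸ h)
  have hpos : 0 < boundary ι D v :=
    sum_pos' (fun x _ => hterm x) ⟨e, mem_univ e, by simp [h.mul_incidence, ha]⟩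
  simp [hbd] at hpos

theorem exists_periodic_traversal [Finite V] (h01 : ∀ e, D e = 0 ∨ D e = 1 ∨ D e = -1)
    (hne : D ≠ 0) (hbd : boundary ι D = 0) :
    ∃ (g : V → V) (ed : V → E) (y : V) (p : ℕ), 0 < p ∧ IsPeriodicPt g p y ∧
      ∀ u ∈ Set.range (g^[·] y), Traverses ι D (ed u) u (g u) := by
  obtain ⟨e₀, he₀⟩ := Function.ne_iff.mp hne
  obtain ⟨a₀, x₀, h₀⟩ := exists_traverses (ι := ι) ((h01 e₀).resolve_left he₀)
  have hnext : ∀ u, ∃ (e : E) (c : V), (∃ e' a, Traverses ι D e' a u) → Traverses ι D e u c := by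
    intro u
    by_cases hu : ∃ e' a, Traverses ι D e' a u
    · obtain ⟨e', a, h⟩ := hu
      obtain ⟨e, c, h'⟩ := h.exists_traverses_of_boundary_eq_zero h01 hbd
      exact ⟨e, c, fun _ => h'⟩
    · exact ⟨e₀, x₀, fun h => absurd h hu⟩
  choose ed g hg using hnext
  have hin : ∀ k, ∃ e a, Traverses ι D e a (g^[k] x₀) := by
    intro k
    induction k with
    | zero => exact ⟨e₀, a₀, h₀⟩
    | succ k ih =>
      rw [iterate_succ_apply']
      exact ⟨_, _, hg _ ih⟩
  obtain ⟨m, p, hp, hper⟩ := exists_isPeriodicPt_iterate g x₀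
  refine ⟨g, ed, g^[m] x₀, p, hp, hper, ?_⟩
  rintro _ ⟨k, rfl⟩
  dsimp only
  rw [← iterate_add_apply]
  exact hg _ (hin _)

theorem isCycleVec_indicator_loop_pair (h01 : ∀ e, D e = 0 ∨ D e = 1 ∨ D e = -1) {e f : E}
    {w : V} (hef : e ≠ f) (he : ι e = (w, w)) (hf : ι f = (w, w)) (hDe : D e ≠ 0)
    (hDf : D f ≠ 0) : IsCycleVec ι (({e, f} : Set E).indicator D) := by
  have hsupp : ∀ x, ({e, f} : Set E).indicator D x ≠ 0 ↔ x = e ∨ x = f := fun x => by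
    rw [Set.indicator_apply_ne_zero]
    refine ⟨fun h => h.1, ?_⟩
    rintro (rfl | rfl)
    exacts [⟨.inl rfl, hDe⟩, ⟨.inr rfl, hDf⟩]
  have hinc : ∀ v x, x ∈ incidentSupport ι (({e, f} : Set E).indicator D) v ↔
      (x = e ∨ x = f) ∧ w = v := fun v x => by
    rw [mem_incidentSupport, hsupp]
    refine and_congr_right fun hx => ?_
    rcases hx with rfl | rfl <;> simp [he, hf]
  refine ⟨fun x => ?_, ⟨e, (hsupp e).2 (.inl rfl)⟩, fun v => ?_, fun v => ?_,
    fun a b ⟨x, hx, hxa⟩ ⟨y, hy, hyb⟩ => ?_⟩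
  · rw [Set.indicator_apply]
    split_ifs
    exacts [h01 x, .inl rfl]
  · refine sum_eq_zero fun x _ => ?_
    by_cases hx : ({e, f} : Set E).indicator D x = 0
    · rw [hx, zero_mul]
    · rcases (hsupp x).1 hx with rfl | rfl <;> simp [he, hf]
  · change #(incidentSupport ι _ v) = 0 ∨ #(incidentSupport ι _ v) = 2
    by_cases hv : w = v
    · have hpair : incidentSupport ι (({e, f} : Set E).indicator D) v = {e, f} :=
        ext fun x => by simp [hinc, hv]
      exact .inr (hpair ▸ card_pair hef)
    · exact .inl (card_eq_zero.mpr (eq_empty_of_forall_notMem fun x hx => hv ((hinc v x).1 hx).2))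
  · obtain rfl := ((hinc a x).1 (mem_incidentSupport.mpr ⟨hx, hxa⟩)).2
    obtain rfl := ((hinc b y).1 (mem_incidentSupport.mpr ⟨hy, hyb⟩)).2
    exact .refl

variable {g : V → V} {ed : V → E} {y : V} {p : ℕ}

theorem mem_incidentSupport_indicator_orbit (hp : 0 < p) (hper : IsPeriodicPt g p y)
    (htrav : ∀ u ∈ Set.range (g^[·] y), Traverses ι D (ed u) u (g u)) {v : V} {x : E} :
    x ∈ incidentSupport ι ((ed '' Set.range (g^[·] y)).indicator D) v ↔
      v ∈ Set.range (g^[·] y) ∧ (x = ed v ∨ x = ed (g^[p - 1] v)) := by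
  rw [mem_incidentSupport, Set.indicator_apply_ne_zero]
  constructor
  · rintro ⟨⟨⟨u, ⟨k, rfl⟩, rfl⟩, -⟩, hinc⟩
    rcases (htrav _ ⟨k, rfl⟩).incident_iff.mp hinc with rfl | rfl
    · exact ⟨⟨k, rfl⟩, .inl rfl⟩
    · refine ⟨⟨k + 1, iterate_succ_apply' g k y⟩, .inr ?_⟩
      rw [(hper.apply_iterate k).iterate_pred_apply hp]
  · rintro ⟨⟨k, rfl⟩, rfl | rfl⟩
    · have ht := htrav _ ⟨k, rfl⟩
      exact ⟨⟨⟨_, ⟨k, rfl⟩, rfl⟩, ht.ne_zero⟩, ht.incident_iff.mpr (.inl rfl)⟩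
    · have hw : g^[p - 1] (g^[k] y) ∈ Set.range (g^[·] y) := ⟨p - 1 + k, iterate_add_apply ..⟩
      have ht := htrav _ hw
      exact ⟨⟨⟨_, hw, rfl⟩, ht.ne_zero⟩,
        ht.incident_iff.mpr (.inr ((hper.apply_iterate k).apply_iterate_pred hp))⟩

omit [Fintype E] [DecidableEq V] in
theorem reachIn_indicator_orbit
    (htrav : ∀ u ∈ Set.range (g^[·] y), Traverses ι D (ed u) u (g u)) (k : ℕ) :
    ReachIn ι {e | (ed '' Set.range (g^[·] y)).indicator D e ≠ 0} y (g^[k] y) := by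
  induction k with
  | zero => exact .refl
  | succ k ih =>
    have ht := htrav _ ⟨k, rfl⟩
    refine ih.tail ⟨ed (g^[k] y), ?_, ?_⟩
    · exact Set.indicator_apply_ne_zero.mpr ⟨⟨_, ⟨k, rfl⟩, rfl⟩, ht.ne_zero⟩
    · rw [iterate_succ_apply']
      exact ht.adj

theorem isCycleVec_indicator_orbit (h01 : ∀ e, D e = 0 ∨ D e = 1 ∨ D e = -1)
    (hloopfree : ∀ e, D e ≠ 0 → (ι e).1 ≠ (ι e).2) (hp : 0 < p) (hper : IsPeriodicPt g p y)
    (htrav : ∀ u ∈ Set.range (g^[·] y), Traverses ι D (ed u) u (g u)) :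
    IsCycleVec ι ((ed '' Set.range (g^[·] y)).indicator D) := by
  classical
  set O := Set.range (g^[·] y)
  set C := (ed '' O).indicator D
  have hinc : ∀ v x, x ∈ incidentSupport ι C v ↔ v ∈ O ∧ (x = ed v ∨ x = ed (g^[p - 1] v)) :=
    fun _ _ => mem_incidentSupport_indicator_orbit hp hper htrav
  have hperO : ∀ u ∈ O, IsPeriodicPt g p u := by
    rintro _ ⟨k, rfl⟩
    exact hper.apply_iterate k
  have hpred : ∀ v ∈ O, g^[p - 1] v ∈ O := by
    rintro _ ⟨k, rfl⟩
    exact ⟨p - 1 + k, iterate_add_apply ..⟩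
  have hC : ∀ u ∈ O, C (ed u) = D (ed u) := fun u hu =>
    Set.indicator_of_mem (Set.mem_image_of_mem ed hu) D
  have hfix : ∀ v ∈ O, g v ≠ v := fun v hv hgv =>
    (htrav v hv).ne (hloopfree _ (htrav v hv).ne_zero) hgv.symm
  have hpred_ne : ∀ v ∈ O, g^[p - 1] v ≠ v := fun v hv h => hfix v hv (by
    conv_lhs => rw [← h]
    exact (hperO v hv).apply_iterate_pred hp)
  have hne : ∀ v ∈ O, ed v ≠ ed (g^[p - 1] v) := fun v hv heq =>
    hpred_ne v hv ((htrav v hv).left_unique (heq ▸ htrav _ (hpred v hv))).symm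
  have hsupp : ∀ v, incidentSupport ι C v = if v ∈ O then {ed v, ed (g^[p - 1] v)} else ∅ := by
    intro v
    ext x
    split_ifs with hv <;> simp [hinc, hv]
  refine ⟨fun x => ?_, ⟨ed y, ?_⟩, fun v => ?_, fun v => ?_,
    fun a b ⟨x, hx, hxa⟩ ⟨z, hz, hzb⟩ => ?_⟩
  · simp only [C, Set.indicator_apply]
    split_ifs
    exacts [h01 x, .inl rfl]
  · rw [hC y ⟨0, rfl⟩]
    exact (htrav y ⟨0, rfl⟩).ne_zero
  · change boundary ι C v = 0
    rw [boundary_apply_eq_sum_incidentSupport, hsupp]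
    split_ifs with hv
    · rw [sum_pair (hne v hv), hC v hv, hC _ (hpred v hv), (htrav v hv).mul_incidence,
        (htrav _ (hpred v hv)).mul_incidence, (hperO v hv).apply_iterate_pred hp]
      simp [hfix v hv, hpred_ne v hv]
    · rfl
  · change #(incidentSupport ι C v) = 0 ∨ #(incidentSupport ι C v) = 2
    rw [hsupp]
    split_ifs with hv
    exacts [.inr (card_pair (hne v hv)), .inl rfl]
  · obtain ⟨⟨i, rfl⟩, -⟩ := (hinc a x).1 (mem_incidentSupport.mpr ⟨hx, hxa⟩)
    obtain ⟨⟨j, rfl⟩, -⟩ := (hinc b z).1 (mem_incidentSupport.mpr ⟨hz, hzb⟩)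
    exact (reachIn_indicator_orbit htrav i).symm.trans (reachIn_indicator_orbit htrav j)

theorem exists_isCycleVec_indicator [Finite V] (h01 : ∀ e, D e = 0 ∨ D e = 1 ∨ D e = -1)
    (hne : D ≠ 0) (hD : IsEvenCirculation ι D) : ∃ T : Set E, IsCycleVec ι (T.indicator D) := by
  by_cases hpair : ∃ e f w, e ≠ f ∧ ι e = (w, w) ∧ ι f = (w, w) ∧ D e ≠ 0 ∧ D f ≠ 0
  · obtain ⟨e, f, w, hef, he, hf, hDe, hDf⟩ := hpair
    exact ⟨_, isCycleVec_indicator_loop_pair h01 hef he hf hDe hDf⟩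
  have hloopfree : ∀ e, D e ≠ 0 → (ι e).1 ≠ (ι e).2 := by
    intro e hDe hloop
    have he : ι e = ((ι e).1, (ι e).1) := Prod.ext rfl hloop.symm
    obtain ⟨t, ht⟩ := hD.2 (ι e).1
    change ∑ x with ι x = _, D x = _ at ht
    rw [sum_eq_single_of_mem e (by simpa using he) fun f hf hfe => by
      by_contra hDf
      exact hpair ⟨f, e, _, hfe, (mem_filter.mp hf).2, he, hDf, hDe⟩] at ht
    rcases h01 e with h | h | h <;> omega
  obtain ⟨g, ed, y, p, hp, hper, htrav⟩ := exists_periodic_traversal h01 hne hD.1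
  exact ⟨_, isCycleVec_indicator_orbit h01 hloopfree hp hper htrav⟩

theorem exists_opposite_dirCycles_of_reflTransGen [Finite V] {ρ : E → ℤ} (hρ : IsOrient ρ)
    (hτ : IsOrient τ) (hne : ρ ≠ τ) (h : ReflTransGen (RevStep ι) ρ τ) :
    ∃ C, DirCycle ι τ C ∧ DirCycle ι ρ (-C) := by
  obtain ⟨X, hX, rfl⟩ := exists_isEvenCirculation_of_reflTransGen h
  have hXe : ∀ e, X e = 0 ∨ X e = -ρ e := fun e => by
    have := hτ e
    rw [Pi.add_apply, Pi.smul_apply, nsmul_eq_mul, Nat.cast_ofNat] at this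
    rcases hρ e with h | h <;> omega
  have h01 : ∀ e, X e = 0 ∨ X e = 1 ∨ X e = -1 := fun e => by
    rcases hρ e with h | h <;> rcases hXe e with h' | h' <;> omega
  obtain ⟨T, hT⟩ := exists_isCycleVec_indicator h01 (fun h0 => hne (by simp [h0])) hX
  have hTX : ∀ e, T.indicator X e ≠ 0 → T.indicator X e = -ρ e := fun e he => by
    obtain ⟨heT, hXe0⟩ := Set.indicator_apply_ne_zero.mp he
    rw [Set.indicator_of_mem heT]
    exact (hXe e).resolve_left hXe0
  refine ⟨T.indicator X, ⟨hT, fun e he => ?_⟩, ⟨hT.neg, fun e he => ?_⟩⟩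
  · have hXρ : X e = -ρ e := (hXe e).resolve_left (Set.indicator_apply_ne_zero.mp he).2
    rw [hTX e he, Pi.add_apply, Pi.smul_apply, hXρ]
    ring
  · rw [Pi.neg_apply, hTX e (by simpa using he), neg_neg]

variable {𝔠 : Set (E → ℤ)}

theorem Faithful.eq_of_reflTransGen [Finite V] (hcfg : IsConfig ι 𝔠) {ρ : E → ℤ}
    (hρ : IsOrient ρ) (hτ : IsOrient τ) (hρf : Faithful ι 𝔠 ρ) (hτf : Faithful ι 𝔠 τ)
    (h : ReflTransGen (RevStep ι) ρ τ) : ρ = τ := by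
  by_contra hne
  obtain ⟨C, hτC, hρC⟩ := exists_opposite_dirCycles_of_reflTransGen hρ hτ hne h
  exact (hcfg.2 C hτC.1).mp (hτf C hτC) (hρf _ hρC)

omit [Fintype E] [DecidableEq V] in
theorem ConfigAcyclic.list_sum_ne_zero (hacyc : ConfigAcyclic 𝔠) {l : List (E → ℤ)}
    (hl : l ≠ []) (h𝔠 : ∀ C ∈ l, C ∈ 𝔠) : l.sum ≠ 0 := by
  intro hsum
  have hsum' : ∑ i, l.get i = 0 := by rw [← List.sum_ofFn, List.ofFn_get, hsum]
  have := hacyc l.length l.get (fun _ => 1) (fun i => h𝔠 _ (List.get_mem l i))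
    fun e => by simpa using congrFun hsum' e
  exact one_ne_zero (this ⟨0, List.length_pos_iff.mpr hl⟩)

omit [Fintype E] [DecidableEq V] in
theorem finite_setOf_isOrient [Finite E] : {σ : E → ℤ | IsOrient σ}.Finite :=
  (Set.Finite.pi fun _ => Set.toFinite {1, -1}).subset fun _ hσ e _ => hσ e

def CorrectingStep (ι : E → V × V) (𝔠 : Set (E → ℤ)) (σ τ : E → ℤ) : Prop :=
  ∃ C, DirCycle ι σ C ∧ -C ∈ 𝔠 ∧ τ = σ - 2 • C

theorem CorrectingStep.revStep (h : CorrectingStep ι 𝔠 σ τ) : RevStep ι σ τ :=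
  let ⟨C, hC, _, hτ⟩ := h
  revStep_iff.mpr ⟨C, hC, hτ⟩

theorem CorrectingStep.exists_eq_add (h : CorrectingStep ι 𝔠 σ τ) :
    ∃ D ∈ 𝔠, τ = σ + 2 • D :=
  let ⟨C, _, hC, hτ⟩ := h
  ⟨-C, hC, by rw [hτ, smul_neg, sub_eq_add_neg]⟩

theorem exists_list_of_transGen_correctingStep
    (h : TransGen (CorrectingStep ι 𝔠) σ τ) :
    ∃ l : List (E → ℤ), l ≠ [] ∧ (∀ D ∈ l, D ∈ 𝔠) ∧ τ = σ + 2 • l.sum := by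
  induction h with
  | single hstep =>
    obtain ⟨D, hD, rfl⟩ := hstep.exists_eq_add
    exact ⟨[D], by simp, by simpa using hD, by simp⟩
  | tail _ hstep ih =>
    obtain ⟨l, hl, h𝔠, rfl⟩ := ih
    obtain ⟨D, hD, rfl⟩ := hstep.exists_eq_add
    refine ⟨l ++ [D], by simp, fun D' hD' => ?_, by rw [List.sum_append, List.sum_singleton,
      smul_add, add_assoc]⟩
    rcases List.mem_append.mp hD' with hD' | hD'
    exacts [h𝔠 D' hD', List.mem_singleton.mp hD' ▸ hD]

theorem not_transGen_correctingStep (hacyc : ConfigAcyclic 𝔠) (σ : E → ℤ) :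
    ¬TransGen (CorrectingStep ι 𝔠) σ σ := by
  intro h
  obtain ⟨l, hl, h𝔠, hσ⟩ := exists_list_of_transGen_correctingStep h
  exact hacyc.list_sum_ne_zero hl h𝔠
    ((smul_eq_zero.mp (add_eq_left.mp hσ.symm)).resolve_left two_ne_zero)

theorem exists_faithful [Finite E] (hcfg : IsConfig ι 𝔠) (hacyc : ConfigAcyclic 𝔠)
    (hσ : IsOrient σ) :
    ∃ τ, IsOrient τ ∧ ReflTransGen (RevStep ι) σ τ ∧ Faithful ι 𝔠 τ := by
  have horient : ∀ τ, ReflTransGen (CorrectingStep ι 𝔠) σ τ → IsOrient τ := fun _ h => by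
    induction h with
    | refl => exact hσ
    | tail _ hstep ih => exact hstep.revStep.isOrient ih
  obtain ⟨τ, hστ, hnormal⟩ := exists_reflTransGen_normal_form
    (finite_setOf_isOrient.subset horient) (not_transGen_correctingStep hacyc)
  refine ⟨τ, horient τ hστ, ReflTransGen.mono (fun _ _ => CorrectingStep.revStep) _ _ hστ,
    fun C hC => ?_⟩
  by_contra hC𝔠
  exact hnormal _ ⟨C, hC, not_not.mp (mt (hcfg.2 C hC.1).mpr hC𝔠), rfl⟩

end

theorem faithful_orientations_are_representatives_general (ι : E → V × V)
    (𝔠 : Set (E → ℤ)) (hcfg : IsConfig ι 𝔠) (hacyc : ConfigAcyclic 𝔠)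
    (σ : E → ℤ) (hσ : IsOrient σ) :
    ∃! τ : E → ℤ, IsOrient τ ∧ Relation.ReflTransGen (RevStep ι) σ τ ∧
      Faithful ι 𝔠 τ := by
  obtain ⟨τ, hτ, hστ, hτf⟩ := exists_faithful hcfg hacyc hσ
  exact ⟨τ, ⟨hτ, hστ, hτf⟩, fun ρ ⟨hρ, hσρ, hρf⟩ =>
    hρf.eq_of_reflTransGen hcfg hρ hτ hτf ((symm_of _ hσρ).trans hστ)⟩

/-- for an acyclic cycle orientation configuration `𝔠` on a connected graph,
the `𝔠`-faithful orientations form a system of representatives for the cycle reversal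
classes: every class contains exactly one. -/
theorem faithful_orientations_are_representatives (ι : E → V × V)
    (hconn : Conn ι Set.univ)
    (𝔠 : Set (E → ℤ)) (hcfg : IsConfig ι 𝔠) (hacyc : ConfigAcyclic 𝔠)
    (σ : E → ℤ) (hσ : IsOrient σ) :
    ∃! τ : E → ℤ, IsOrient τ ∧ Relation.ReflTransGen (RevStep ι) σ τ ∧
      Faithful ι 𝔠 τ :=
  faithful_orientations_are_representatives_general ι 𝔠 hcfg hacyc σ hσ
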